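/- Let g : ℝ → ℝ and let (a_n)_{n≥0} be a real sequence with a_0 = 1 such that for every N ≥ 0, g(x) − Σ_{n=0}^{N} a_n x^{−n} = O(x^{−(N+1)}) as x → ∞. Let p be a real number and define the sequence (b_n(p)) by b_0(p) = 1 and b_n(p) = (1/n) Σ_{k=1}^{n} [k(1+p) − n] a_k b_{n−k}(p) for n ≥ 1. Then for every N ≥ 0, g(x)^p − Σ_{n=0}^{N} b_n(p) x^{−n} = O(x^{−(N+1)}) as x → ∞ (here g(x)^p is the real power, which is well defined since g(x) → 1, so g is eventually positive). -/

import Mathlib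

/-!
Put t = 1/x and let A, B be the degree-N truncations of Σ aₙtⁿ and Σ bₙtⁿ. The recurrence
for b says exactly that the formal series satisfy A·B' = p·A'·B, the differential equation
of A^p; so the polynomials satisfy it up to O(t^N), whence (B·A^(-p))' = O(t^N) and
B − A^p = O(t^(N+1)) near 0. Since rpow is C¹ near 1, also
g(x)^p − A(1/x)^p = O(g(x) − A(1/x)) = O(x^(-(N+1))).
-/

open Finset Filter Asymptotics Topology PowerSeries

theorem Finset.sum_range_succ_eq_add_sum_Icc {M : Type*} [AddCommMonoid M] (f : ℕ → M) (n : ℕ) :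
    ∑ k ∈ range (n + 1), f k = f 0 + ∑ k ∈ Icc 1 n, f k := by
  rw [range_eq_Ico, sum_eq_sum_Ico_succ_bot n.succ_pos, Nat.succ_eq_add_one,
    Ico_add_one_right_eq_Icc]

theorem PowerSeries.mk_mul_derivative_mk {R : Type*} [CommRing R] {a b : ℕ → R} (p : R)
    (ha0 : a 0 = 1)
    (hb : ∀ n : ℕ, 1 ≤ n →
      (n : R) * b n = ∑ k ∈ Icc 1 n, ((k : R) * (1 + p) - n) * a k * b (n - k)) :
    mk a * d⁄dX R (mk b) = C p * d⁄dX R (mk a) * mk b := by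
  ext m
  -- the recurrence at m + 1, with its k = 0 term `-(m + 1) b (m + 1)` moved into the sum
  have hrec : ∑ x ∈ antidiagonal (m + 1), ((x.1 : R) * p - x.2) * a x.1 * b x.2 = 0 := by
    have hm := hb (m + 1) m.succ_pos
    rw [Nat.sum_antidiagonal_eq_sum_range_succ_mk, Finset.sum_range_succ_eq_add_sum_Icc,
      sum_congr rfl fun k hk => by rw [Nat.cast_sub (mem_Icc.mp hk).2]]
    simp only [ha0, Nat.cast_zero, Nat.sub_zero]
    push_cast at hm ⊢
    simp only [show ∀ x : R, x * p - (m + 1 - x) = x * (1 + p) - (m + 1) from fun x => by ring]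
    linear_combination -hm
  have hL : coeff m (mk a * d⁄dX R (mk b))
      = ∑ x ∈ antidiagonal (m + 1), a x.1 * (b x.2 * x.2) := by
    rw [coeff_mul, Nat.sum_antidiagonal_succ']
    simp only [coeff_mk, coeff_derivative, Nat.cast_zero, mul_zero, Nat.cast_add, Nat.cast_one,
      zero_add]
  have hR : coeff m (C p * d⁄dX R (mk a) * mk b)
      = p * ∑ x ∈ antidiagonal (m + 1), a x.1 * x.1 * b x.2 := by
    rw [mul_assoc, coeff_C_mul, coeff_mul, Nat.sum_antidiagonal_succ]
    simp only [coeff_mk, coeff_derivative, Nat.cast_zero, mul_zero, zero_mul, Nat.cast_add,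
      Nat.cast_one, zero_add]
  rw [hL, hR, ← sub_eq_zero, mul_sum, ← sum_sub_distrib, ← neg_eq_zero, ← sum_neg_distrib, ← hrec]
  exact sum_congr rfl fun x _ => by ring

theorem PowerSeries.X_pow_dvd_trunc_mul_derivative_trunc_sub {R : Type*} [CommRing R]
    (A B : R⟦X⟧) (N : ℕ) :
    Polynomial.X ^ N ∣
      trunc (N + 1) A * Polynomial.derivative (trunc (N + 1) B) - trunc N (A * d⁄dX R B) := by
  rw [← trunc_derivative, Polynomial.X_pow_dvd_iff]
  intro d hd
  rw [Polynomial.coeff_sub, coeff_trunc, if_pos hd, ← Polynomial.coeff_coe, Polynomial.coe_mul,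
    ← coeff_mul_eq_coeff_trunc_mul_trunc₂ _ _ (by omega) hd, sub_self]

theorem PowerSeries.X_pow_dvd_trunc_mul_derivative_trunc_sub_of_eq {R : Type*} [CommRing R]
    {A B : R⟦X⟧} {p : R} (hAB : A * d⁄dX R B = C p * d⁄dX R A * B) (N : ℕ) :
    Polynomial.X ^ N ∣ trunc (N + 1) A * Polynomial.derivative (trunc (N + 1) B)
      - Polynomial.C p * Polynomial.derivative (trunc (N + 1) A) * trunc (N + 1) B := by
  have htrunc : trunc N (A * d⁄dX R B) = Polynomial.C p * trunc N (B * d⁄dX R A) := by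
    rw [hAB, ← trunc_C_mul, mul_comm B, mul_assoc]
  convert dvd_sub (X_pow_dvd_trunc_mul_derivative_trunc_sub A B N)
    (dvd_mul_of_dvd_right (X_pow_dvd_trunc_mul_derivative_trunc_sub B A N) (Polynomial.C p))
    using 1
  rw [htrunc]
  ring

theorem Polynomial.isBigO_eval_of_X_pow_dvd {Q : Polynomial ℝ} {N : ℕ} (h : X ^ N ∣ Q) :
    (fun t => Q.eval t) =O[𝓝 0] fun t => t ^ N := by
  obtain ⟨E, rfl⟩ := h
  simpa [eval_mul] using
    (isBigO_refl (fun t : ℝ => t ^ N) _).mul ((E.continuous.tendsto 0).isBigO_one ℝ)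

theorem PowerSeries.eval_inv_trunc_mk (c : ℕ → ℝ) (N : ℕ) (x : ℝ) :
    (trunc N (mk c)).eval x⁻¹ = ∑ n ∈ range N, c n * x ^ (-(n : ℤ)) := by
  simp [Polynomial.eval, eval₂_trunc_eq_sum_range, zpow_neg, inv_pow]

theorem isBigO_sub_pow_succ_of_hasDerivAt {F : Type*} [NormedAddCommGroup F] [NormedSpace ℝ F]
    {φ φ' : ℝ → F} {N : ℕ} (hφ : ∀ᶠ t in 𝓝 0, HasDerivAt φ (φ' t) t)
    (hφ' : φ' =O[𝓝 0] fun t => t ^ N) :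
    (fun t => φ t - φ 0) =O[𝓝 0] fun t => t ^ (N + 1) := by
  obtain ⟨C, hC0, hC⟩ := hφ'.exists_pos
  obtain ⟨δ, hδ, hball⟩ := Metric.eventually_nhds_iff_ball.mp (hφ.and hC.bound)
  refine IsBigO.of_bound C (Metric.eventually_nhds_iff_ball.mpr ⟨δ, hδ, fun u hu => ?_⟩)
  have hsub : Set.Icc (-|u|) |u| ⊆ Metric.ball 0 δ := fun t ht => by
    rw [Metric.mem_ball, dist_zero_right, Real.norm_eq_abs] at hu ⊢
    exact (abs_le.mpr ht).trans_lt hu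
  have hbound : ∀ t ∈ Set.Icc (-|u|) |u|, ‖φ' t‖ ≤ C * |u| ^ N := fun t ht => by
    refine (hball t (hsub ht)).2.trans ?_
    rw [norm_pow, Real.norm_eq_abs]
    exact mul_le_mul_of_nonneg_left (pow_le_pow_left₀ (abs_nonneg t) (abs_le.mpr ht) N) hC0.le
  have := (convex_Icc (-|u|) |u|).norm_image_sub_le_of_norm_hasDerivWithin_le
    (fun t ht => (hball t (hsub ht)).1.hasDerivWithinAt) hbound
    (Set.mem_Icc.mpr ⟨neg_nonpos.mpr (abs_nonneg u), abs_nonneg u⟩)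
    (Set.mem_Icc.mpr ⟨neg_abs_le u, le_abs_self u⟩)
  simpa [norm_pow, pow_succ, mul_assoc] using this

theorem isBigO_sub_rpow_of_isBigO_mul_deriv_sub {f h f' h' : ℝ → ℝ} (p : ℝ) {N : ℕ}
    (hf : ∀ᶠ t in 𝓝 0, HasDerivAt f (f' t) t) (hh : ∀ᶠ t in 𝓝 0, HasDerivAt h (h' t) t)
    (hf0 : 0 < f 0) (hh0 : h 0 = f 0 ^ p)
    (hode : (fun t => f t * h' t - p * f' t * h t) =O[𝓝 0] fun t => t ^ N) :
    (fun t => h t - f t ^ p) =O[𝓝 0] fun t => t ^ (N + 1) := by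
  have hfc : ContinuousAt f 0 := hf.self_of_nhds.continuousAt
  have hpos : ∀ᶠ t in 𝓝 0, 0 < f t := hfc.eventually (lt_mem_nhds hf0)
  have hquot : ∀ᶠ t in 𝓝 0, HasDerivAt (fun t => h t * f t ^ (-p))
      (f t ^ (-p - 1) * (f t * h' t - p * f' t * h t)) t := by
    filter_upwards [hf, hh, hpos] with t hft hht ht
    refine (hht.mul (hft.rpow_const (p := -p) (Or.inl ht.ne'))).congr_deriv ?_
    rw [Real.rpow_sub_one ht.ne']
    field_simp
    ring
  have hbdd : ∀ q : ℝ, (fun t => f t ^ q) =O[𝓝 0] fun _ => (1 : ℝ) := fun q =>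
    ((hfc.rpow_const (Or.inl hf0.ne')).tendsto).isBigO_one ℝ
  have hφ := isBigO_sub_pow_succ_of_hasDerivAt hquot
    (by simpa using (hbdd (-p - 1)).mul hode)
  have hφ0 : h 0 * f 0 ^ (-p) = 1 := by
    rw [hh0, Real.rpow_neg hf0.le, mul_inv_cancel₀ (Real.rpow_pos_of_pos hf0 p).ne']
  refine ((hbdd p).mul hφ).congr' ?_ (by simp)
  filter_upwards [hpos] with t ht
  rw [hφ0, Real.rpow_neg ht.le]
  field_simp [(Real.rpow_pos_of_pos ht p).ne']

theorem Polynomial.isBigO_eval_sub_eval_rpow {A B : Polynomial ℝ} (p : ℝ) {N : ℕ}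
    (hA0 : A.eval 0 = 1) (hB0 : B.eval 0 = 1)
    (hdvd : X ^ N ∣ A * derivative B - C p * derivative A * B) :
    (fun t => B.eval t - A.eval t ^ p) =O[𝓝 0] fun t => t ^ (N + 1) := by
  have hode := isBigO_eval_of_X_pow_dvd hdvd
  simp only [eval_sub, eval_mul, eval_C] at hode
  exact isBigO_sub_rpow_of_isBigO_mul_deriv_sub p (.of_forall A.hasDerivAt)
    (.of_forall B.hasDerivAt) (by rw [hA0]; exact one_pos) (by rw [hA0, hB0, Real.one_rpow]) hode

theorem rpow_sub_rpow_isBigO_sub {α : Type*} {l : Filter α} {u v : α → ℝ} {c : ℝ} (hc : c ≠ 0)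
    (hu : Tendsto u l (𝓝 c)) (hv : Tendsto v l (𝓝 c)) (p : ℝ) :
    (fun x => u x ^ p - v x ^ p) =O[l] fun x => u x - v x :=
  (Real.hasStrictDerivAt_rpow_const_of_ne hc p).isBigO_sub.comp_tendsto (hu.prodMk_nhds hv)

theorem exponent_of_asymptotic_expansion
    (g : ℝ → ℝ) (a : ℕ → ℝ) (ha0 : a 0 = 1)
    (hg : ∀ N : ℕ,
      (fun x : ℝ => g x - ∑ n ∈ Finset.range (N + 1), a n * x ^ (-(n : ℤ)))
        =O[atTop] fun x : ℝ => x ^ (-((N : ℤ) + 1)))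
    (p : ℝ) (b : ℕ → ℝ) (hb0 : b 0 = 1)
    (hb : ∀ n : ℕ, 1 ≤ n →
      b n = (1 / (n : ℝ)) *
        ∑ k ∈ Finset.Icc 1 n, ((k : ℝ) * (1 + p) - (n : ℝ)) * a k * b (n - k)) :
    ∀ N : ℕ,
      (fun x : ℝ => g x ^ p - ∑ n ∈ Finset.range (N + 1), b n * x ^ (-(n : ℤ)))
        =O[atTop] fun x : ℝ => x ^ (-((N : ℤ) + 1)) := by
  intro N
  set A := trunc (N + 1) (mk a)
  set B := trunc (N + 1) (mk b)
  have hA0 : A.eval 0 = 1 := by simp [A, ← Polynomial.coeff_zero_eq_eval_zero, coeff_trunc, ha0]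
  have hB0 : B.eval 0 = 1 := by simp [B, ← Polynomial.coeff_zero_eq_eval_zero, coeff_trunc, hb0]
  have hser : mk a * d⁄dX ℝ (mk b) = C p * d⁄dX ℝ (mk a) * mk b :=
    mk_mul_derivative_mk p ha0 fun n hn => by
      rw [hb n hn, ← mul_assoc, mul_one_div_cancel (by positivity), one_mul]
  have hnear := Polynomial.isBigO_eval_sub_eval_rpow p hA0 hB0
    (X_pow_dvd_trunc_mul_derivative_trunc_sub_of_eq hser N)
  have hfar : (fun x : ℝ => B.eval x⁻¹ - A.eval x⁻¹ ^ p)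
      =O[atTop] fun x : ℝ => x ^ (-((N : ℤ) + 1)) := by
    refine (hnear.comp_tendsto tendsto_inv_atTop_zero).congr_right fun x => ?_
    simp [← zpow_natCast]
  have hgA : (fun x => g x - A.eval x⁻¹) =O[atTop] fun x : ℝ => x ^ (-((N : ℤ) + 1)) := by
    simpa only [A, eval_inv_trunc_mk] using hg N
  have hA1 : Tendsto (fun x : ℝ => A.eval x⁻¹) atTop (𝓝 1) :=
    hA0 ▸ (A.continuous.tendsto 0).comp tendsto_inv_atTop_zero
  have hg1 : Tendsto g atTop (𝓝 1) := by
    simpa using (hgA.trans_tendsto (tendsto_zpow_atTop_zero (by omega))).add hA1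
  refine ((rpow_sub_rpow_isBigO_sub one_ne_zero hg1 hA1 p).trans hgA |>.sub hfar).congr
    (fun x => ?_) fun _ => rfl
  simp only [B, eval_inv_trunc_mk]
  ring
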